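/- If k_p, k_v > 0 with k_p + k_v < g, and μ_d = −k_p h(e_p) − k_v h(v) where h(u) = u/sqrt(1+u^T u), then the thrust u_t = ‖μ_d − g e3‖ satisfies the bounds 0 < g − k_p − k_v ≤ u_t ≤ g + k_p + k_v. In particular μ_d ∉ L. -/

import Mathlib

open Matrix

noncomputable section

/-- The Euclidean norm of a vector in ℝ³. -/
def vnorm (x : Fin 3 → ℝ) : ℝ := Real.sqrt (x ⬝ᵥ x)

/-- The bounded function `h(u) = (1 + uᵀu)^{-1/2} u`. -/
def hfun (u : Fin 3 → ℝ) : Fin 3 → ℝ := (Real.sqrt (1 + u ⬝ᵥ u))⁻¹ • u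

/-- The third basis vector `e₃ = (0,0,1)`. -/
def e3 : Fin 3 → ℝ := ![0, 0, 1]

/-- The singular set `L = {(0,0,z) : z ≥ g}`. -/
def Lsing (g : ℝ) : Set (Fin 3 → ℝ) := {x | x 0 = 0 ∧ x 1 = 0 ∧ g ≤ x 2}

/-!
`h` maps into the open unit ball, so the triangle inequality gives `‖μ_d‖ ≤ k_p + k_v`.
Since `‖g e₃‖ = g`, the reverse triangle inequality puts `u_t = ‖μ_d - g e₃‖` within `‖μ_d‖`
of `g`; and every point of `L` has norm at least `g > k_p + k_v`, so `μ_d ∉ L`.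
-/

lemma dotProduct_self_eq_norm_sq (x : Fin 3 → ℝ) : x ⬝ᵥ x = ‖WithLp.toLp 2 x‖ ^ 2 := by
  rw [← real_inner_self_eq_norm_sq, EuclideanSpace.inner_toLp_toLp, star_trivial]

lemma vnorm_eq_norm (x : Fin 3 → ℝ) : vnorm x = ‖WithLp.toLp 2 x‖ := by
  rw [vnorm, dotProduct_self_eq_norm_sq, Real.sqrt_sq (norm_nonneg _)]

lemma norm_toLp_e3 : ‖WithLp.toLp 2 e3‖ = 1 := by
  rw [← vnorm_eq_norm, vnorm]
  simp [e3, dotProduct, Fin.sum_univ_three]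

lemma norm_inv_sqrt_one_add_sq_smul_lt_one {E : Type*} [SeminormedAddCommGroup E]
    [NormedSpace ℝ E] (u : E) : ‖(√(1 + ‖u‖ ^ 2))⁻¹ • u‖ < 1 := by
  have hpos : 0 < √(1 + ‖u‖ ^ 2) := Real.sqrt_pos.mpr (by positivity)
  rw [norm_smul, Real.norm_eq_abs, abs_inv, abs_of_pos hpos, inv_mul_lt_one₀ hpos]
  calc ‖u‖ = √(‖u‖ ^ 2) := (Real.sqrt_sq (norm_nonneg u)).symm
    _ < √(1 + ‖u‖ ^ 2) := Real.sqrt_lt_sqrt (by positivity) (by linarith)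

lemma norm_toLp_hfun_lt_one (u : Fin 3 → ℝ) : ‖WithLp.toLp 2 (hfun u)‖ < 1 := by
  rw [hfun, dotProduct_self_eq_norm_sq, WithLp.toLp_smul]
  exact norm_inv_sqrt_one_add_sq_smul_lt_one (WithLp.toLp 2 u)

lemma norm_smul_add_smul_le_add {E : Type*} [SeminormedAddCommGroup E] [NormedSpace ℝ E]
    {a b : ℝ} (ha : 0 ≤ a) (hb : 0 ≤ b) {x y : E} (hx : ‖x‖ ≤ 1) (hy : ‖y‖ ≤ 1) :
    ‖a • x + b • y‖ ≤ a + b :=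
  calc ‖a • x + b • y‖ ≤ a * ‖x‖ + b * ‖y‖ := norm_add_le_of_le
        (by rw [norm_smul, Real.norm_of_nonneg ha]) (by rw [norm_smul, Real.norm_of_nonneg hb])
    _ ≤ a + b := by nlinarith

lemma abs_norm_sub_smul_sub_le {E : Type*} [SeminormedAddCommGroup E] [NormedSpace ℝ E]
    (μ : E) {e : E} (he : ‖e‖ = 1) {g : ℝ} (hg : 0 ≤ g) : |‖μ - g • e‖ - g| ≤ ‖μ‖ := by
  have hge : ‖g • e‖ = g := by rw [norm_smul, he, mul_one, Real.norm_of_nonneg hg]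
  simpa [hge] using abs_norm_sub_norm_le (μ - g • e) (-(g • e))

lemma le_norm_toLp_of_mem_Lsing {g : ℝ} {x : Fin 3 → ℝ} (hx : x ∈ Lsing g) :
    g ≤ ‖WithLp.toLp 2 x‖ :=
  calc g ≤ x 2 := hx.2.2
    _ ≤ ‖x 2‖ := Real.le_norm_self _
    _ ≤ ‖WithLp.toLp 2 x‖ := PiLp.norm_apply_le (WithLp.toLp 2 x) 2

theorem thrust_bounds_general (g kp kv : ℝ) (hkp : 0 < kp) (hkv : 0 < kv)
    (hksum : kp + kv < g) (ep v : Fin 3 → ℝ)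
    (μd : Fin 3 → ℝ) (hμd : μd = -(kp • hfun ep) - kv • hfun v)
    (ut : ℝ) (hut : ut = vnorm (μd - g • e3)) :
    (0 < g - kp - kv ∧ g - kp - kv ≤ ut ∧ ut ≤ g + kp + kv) ∧ μd ∉ Lsing g := by
  have hμd_le : ‖WithLp.toLp 2 μd‖ ≤ kp + kv := by
    rw [hμd, ← neg_add', WithLp.toLp_neg, norm_neg, WithLp.toLp_add, WithLp.toLp_smul,
      WithLp.toLp_smul]
    exact norm_smul_add_smul_le_add hkp.le hkv.le
      (norm_toLp_hfun_lt_one ep).le (norm_toLp_hfun_lt_one v).le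
  have hut_near_g : |ut - g| ≤ kp + kv := by
    rw [hut, vnorm_eq_norm, WithLp.toLp_sub, WithLp.toLp_smul]
    exact (abs_norm_sub_smul_sub_le _ norm_toLp_e3 (by linarith)).trans hμd_le
  obtain ⟨hlow, hup⟩ := abs_le.mp hut_near_g
  exact ⟨⟨by linarith, by linarith, by linarith⟩,
    fun hL => absurd ((le_norm_toLp_of_mem_Lsing hL).trans hμd_le) (not_le.mpr hksum)⟩

theorem thrust_bounds (g kp kv : ℝ) (hg : 0 < g) (hkp : 0 < kp) (hkv : 0 < kv)
    (hksum : kp + kv < g) (ep v : Fin 3 → ℝ)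
    (μd : Fin 3 → ℝ) (hμd : μd = -(kp • hfun ep) - kv • hfun v)
    (ut : ℝ) (hut : ut = vnorm (μd - g • e3)) :
    (0 < g - kp - kv ∧ g - kp - kv ≤ ut ∧ ut ≤ g + kp + kv) ∧ μd ∉ Lsing g :=
  thrust_bounds_general g kp kv hkp hkv hksum ep v μd hμd ut hut

end
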